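/- There is a constant c₂ > 0 (independent of n) such that the Cayley graph of the symmetric group S_n with generating set {(12), (12…n), (12…n)⁻¹} has spectral gap λ ≥ c₂·n⁻³, where λ is the least nonzero eigenvalue of minus the graph Laplacian. -/

import Mathlib

noncomputable section
open Matrix

/-- The graph Laplacian: `Δ f (x) = Σ_{y ~ x} (f y - f x)`. -/
def lap {V : Type*} (G : SimpleGraph V) (f : V → ℝ) (x : V) : ℝ :=
  ∑ᶠ y ∈ {y | G.Adj x y}, (f y - f x)

/-- The carré du champ `Γ(f,g)(x) = (1/2) Σ_{y ~ x} (f x - f y)(g x - g y)`. -/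
def gam {V : Type*} (G : SimpleGraph V) (f g : V → ℝ) (x : V) : ℝ :=
  (1/2) * ∑ᶠ y ∈ {y | G.Adj x y}, (f x - f y) * (g x - g y)

/-- The iterated carré du champ `Γ₂(f) = (1/2) Δ Γ(f) - Γ(f, Δ f)`. -/
def gam2 {V : Type*} (G : SimpleGraph V) (f : V → ℝ) (x : V) : ℝ :=
  (1/2) * lap G (gam G f f) x - gam G f (lap G f) x

/-- `Ric(G) ≥ K` : the Bochner inequality `Γ₂(f)(x) ≥ K Γ(f)(x)` holds for all `f, x`. -/
def RicGE {V : Type*} (G : SimpleGraph V) (K : ℝ) : Prop :=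
  ∀ (f : V → ℝ) (x : V), K * gam G f f x ≤ gam2 G f x

open Classical in
/-- Degree of a vertex. -/
def degC {V : Type*} [Fintype V] (G : SimpleGraph V) (x : V) : ℕ :=
  (Finset.univ.filter fun y => G.Adj x y).card

open Classical in
/-- The Laplacian matrix `Δ = A - D` (negative semidefinite). -/
def lapMat {V : Type*} [Fintype V] (G : SimpleGraph V) : Matrix V V ℝ :=
  Matrix.of fun x y => (if G.Adj x y then (1:ℝ) else 0) - (if x = y then (degC G x : ℝ) else 0)

/-- The spectral gap: least nonzero eigenvalue of `-Δ`. -/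
def spectralGap {V : Type*} [Fintype V] (G : SimpleGraph V) : ℝ :=
  sInf {μ : ℝ | μ ≠ 0 ∧ ∃ f : V → ℝ, f ≠ 0 ∧ (-(lapMat G)) *ᵥ f = μ • f}

open Classical in
/-- Number of edges from `A` to its complement. -/
def boundary {V : Type*} [Fintype V] (G : SimpleGraph V) (A : Finset V) : ℕ :=
  ∑ x ∈ A, (Finset.univ.filter fun y => G.Adj x y ∧ y ∉ A).card

/-- The Cheeger (edge-isoperimetric) constant. -/
def cheeger {V : Type*} [Fintype V] (G : SimpleGraph V) : ℝ :=
  sInf {r : ℝ | ∃ A : Finset V, 0 < A.card ∧ 2 * A.card ≤ Fintype.card V ∧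
    r = (boundary G A : ℝ) / (A.card : ℝ)}

/-- The heat semigroup `P_t f = exp(tΔ) f`. -/
def heat {V : Type*} [Fintype V] [DecidableEq V] (G : SimpleGraph V) (t : ℝ) (f : V → ℝ) :
    V → ℝ :=
  (NormedSpace.exp (t • lapMat G)) *ᵥ f

/-- The generating set `{(1 2), (1 2 ⋯ n), (1 2 ⋯ n)⁻¹}` in the symmetric group `S_{n+2}`,
realized as permutations of `Fin (n+2)`; `finRotate` is the long cycle. -/
def snGen (n : ℕ) : Set (Equiv.Perm (Fin (n + 2))) :=
  {Equiv.swap 0 1, finRotate (n + 2), (finRotate (n + 2))⁻¹}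

/-- The Cayley graph of `S_{n+2}` with generating set `snGen n`. -/
def snGraph (n : ℕ) : SimpleGraph (Equiv.Perm (Fin (n + 2))) where
  Adj x y := x ≠ y ∧ x⁻¹ * y ∈ snGen n
  symm := by
    refine ⟨?_⟩
    rintro x y ⟨hne, hs⟩
    refine ⟨hne.symm, ?_⟩
    have h : (x⁻¹ * y)⁻¹ ∈ snGen n := by
      rcases hs with h | h | h <;> rw [h] <;> simp [snGen, Equiv.swap_inv]
    simpa [_root_.mul_inv_rev] using h
  loopless := by refine ⟨?_⟩; rintro x ⟨hne, -⟩; exact hne rfl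

/-!
Let `f` be orthogonal to the constants and let `Hₖ` be the subgroup of `Sₙ` fixing `1, …, k`.
Averaging over `Hₖ` is an orthogonal projection, and these projections decrease along
`Sₙ = H₀ ≥ H₁ ≥ ⋯ ≥ Hₙ = 1`, so `‖f‖²` is the sum of the `n` squared increments between
consecutive averages. Since `Hₖ` is covered by the cosets `τ Hₖ₊₁` with `τ` a transposition, and
`Hₖ₊₁`-conjugates of transpositions are transpositions, each increment is bounded by the largest
displacement `‖f(· τ) - f‖` of a transposition `τ`. Displacement is a group seminorm and every
transposition is a product of `O(n)` generators `(1 2)`, `(1 2 ⋯ n)^{±1}`, so each squared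
increment is `O(n²)` times the Dirichlet energy `⟨f, -Δ f⟩`, whence `‖f‖² ≤ 72 n³ ⟨f, -Δ f⟩`.
-/

open Finset
open scoped InnerProductSpace

lemma norm_toLp_sq {ι : Type*} [Fintype ι] (f : ι → ℝ) : ‖WithLp.toLp 2 f‖ ^ 2 = f ⬝ᵥ f :=
  (EuclideanSpace.real_norm_sq_eq (WithLp.toLp 2 f)).trans (by simp [dotProduct, sq])

section RightRegular

variable {G : Type*} [Group G] [Fintype G]

def rightRegular : G →* (EuclideanSpace ℝ G ≃ₗᵢ[ℝ] EuclideanSpace ℝ G) where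
  toFun g := LinearIsometryEquiv.piLpCongrLeft 2 ℝ ℝ (Equiv.mulRight g⁻¹)
  map_one' := by ext; simp [LinearIsometryEquiv.piLpCongrLeft_apply, Equiv.Perm.one_def]
  map_mul' g h := by
    ext; simp [LinearIsometryEquiv.piLpCongrLeft_apply, Equiv.Perm.mul_def, mul_assoc]

local notation "ρ" => rightRegular

@[simp]
lemma rightRegular_apply (g : G) (v : EuclideanSpace ℝ G) (x : G) : ρ g v x = v (x * g) := by
  simp [rightRegular, LinearIsometryEquiv.piLpCongrLeft_apply]

lemma rightRegular_rightRegular (g h : G) (v : EuclideanSpace ℝ G) : ρ g (ρ h v) = ρ (g * h) v := by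
  rw [map_mul]; rfl

def displacement (v : EuclideanSpace ℝ G) : GroupSeminorm G where
  toFun g := ‖ρ g v - v‖
  map_one' := by simp
  mul_le' g h := by
    have : ρ (g * h) v - v = (ρ g v - v) + ρ g (ρ h v - v) := by
      rw [map_sub, rightRegular_rightRegular]; abel
    rw [this]
    exact (norm_add_le _ _).trans_eq (by rw [LinearIsometryEquiv.norm_map])
  inv' g := by
    have : ρ g⁻¹ v - v = -ρ g⁻¹ (ρ g v - v) := by
      rw [map_sub, rightRegular_rightRegular, inv_mul_cancel, map_one]; simp
    rw [this, norm_neg, LinearIsometryEquiv.norm_map]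

lemma displacement_apply (v : EuclideanSpace ℝ G) (g : G) : displacement v g = ‖ρ g v - v‖ := rfl

lemma displacement_toLp_sq (f : G → ℝ) (g : G) :
    displacement (WithLp.toLp 2 f) g ^ 2 = ∑ x, (f (x * g) - f x) ^ 2 := by
  simp [displacement_apply, EuclideanSpace.real_norm_sq_eq]

lemma norm_inv_card_smul_sum_le {ι E : Type*} [Fintype ι] [Nonempty ι] [SeminormedAddCommGroup E]
    [NormedSpace ℝ E] (u : ι → E) {β : ℝ} (hu : ∀ i, ‖u i‖ ≤ β) :
    ‖(Nat.card ι : ℝ)⁻¹ • ∑ i, u i‖ ≤ β := by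
  have hcard : (0 : ℝ) < Nat.card ι := by exact_mod_cast Nat.card_pos
  rw [norm_smul, norm_inv, Real.norm_natCast, inv_mul_le_iff₀ hcard]
  calc ‖∑ i, u i‖ ≤ ∑ i, ‖u i‖ := norm_sum_le _ _
    _ ≤ ∑ _i : ι, β := sum_le_sum fun i _ => hu i
    _ = Nat.card ι * β := by simp [Nat.card_eq_fintype_card]

open Classical in
def average (H : Subgroup G) : EuclideanSpace ℝ G →ₗ[ℝ] EuclideanSpace ℝ G :=
  (Nat.card H : ℝ)⁻¹ • ∑ h : H, (ρ (h : G)).toLinearEquiv.toLinearMap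

open Classical

variable (H K : Subgroup G) (v w : EuclideanSpace ℝ G)

lemma average_apply : average H v = (Nat.card H : ℝ)⁻¹ • ∑ h : H, ρ (h : G) v := by
  simp [average]

variable {H K}

lemma average_rightRegular {k : G} (hk : k ∈ H) : average H (ρ k v) = average H v := by
  simp only [average_apply, rightRegular_rightRegular]
  congr 1
  exact Fintype.sum_equiv (Equiv.mulRight ⟨k, hk⟩) (fun h : H => ρ ((h : G) * k) v)
    (fun h : H => ρ (h : G) v) fun _ => by simp

lemma rightRegular_average {k : G} (hk : k ∈ H) : ρ k (average H v) = average H v := by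
  simp only [average_apply, map_smul, map_sum, rightRegular_rightRegular]
  congr 1
  exact Fintype.sum_equiv (Equiv.mulLeft ⟨k, hk⟩) (fun h : H => ρ (k * h) v)
    (fun h : H => ρ (h : G) v) fun _ => by simp

lemma inv_card_smul_sum_const : (Nat.card H : ℝ)⁻¹ • ∑ _h : H, w = w := by
  have hcard : (Nat.card H : ℝ) ≠ 0 := by exact_mod_cast Nat.card_pos.ne'
  rw [sum_const, card_univ, ← Nat.card_eq_fintype_card, ← Nat.cast_smul_eq_nsmul ℝ, smul_smul,
    inv_mul_cancel₀ hcard, one_smul]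

lemma average_eq_self (hw : ∀ k ∈ H, ρ k w = w) : average H w = w := by
  rw [average_apply, sum_congr rfl fun (h : H) _ => hw h h.2, inv_card_smul_sum_const]

lemma average_average_of_le (hKH : K ≤ H) : average H (average K v) = average H v := by
  rw [average_apply K, map_smul, map_sum,
    sum_congr rfl fun (k : K) _ => average_rightRegular v (hKH k.2), inv_card_smul_sum_const]

lemma average_average_of_le' (hKH : K ≤ H) : average K (average H v) = average H v :=
  average_eq_self _ fun _ hk => rightRegular_average v (hKH hk)

lemma inner_average_left : ⟪average H v, w⟫_ℝ = ⟪v, average H w⟫_ℝ := by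
  simp only [average_apply, inner_smul_left, inner_smul_right, sum_inner, inner_sum]
  congr 1
  refine Fintype.sum_equiv (Equiv.inv H) _ _ fun h => ?_
  rw [← LinearIsometryEquiv.inner_map_map (ρ (h : G)⁻¹), rightRegular_rightRegular]
  simp

lemma norm_average_sub_average_sq (hKH : K ≤ H) :
    ‖average K v - average H v‖ ^ 2 = ‖average K v‖ ^ 2 - ‖average H v‖ ^ 2 := by
  have hcross : ⟪average K v, average H v⟫_ℝ = ‖average H v‖ ^ 2 := by
    rw [← real_inner_self_eq_norm_sq, inner_average_left, average_average_of_le' v hKH,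
      inner_average_left, average_average_of_le v le_rfl]
  rw [norm_sub_sq_real, hcross]
  ring

lemma average_bot : average ⊥ v = v :=
  average_eq_self v fun k hk => by rw [Subgroup.mem_bot.1 hk, map_one]; rfl

lemma average_top_eq_zero (hv : ∑ x, v x = 0) : average ⊤ v = 0 := by
  ext x
  have : ∑ h : (⊤ : Subgroup G), v (x * h) = ∑ g, v g :=
    Fintype.sum_equiv ((Equiv.subtypeUnivEquiv Subgroup.mem_top).trans (Equiv.mulLeft x)) _ _
      fun _ => rfl
  simp [average_apply, this, hv]

lemma norm_sub_average_le {β : ℝ} (hβ : ∀ h ∈ H, displacement w h ≤ β) :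
    ‖w - average H w‖ ≤ β := by
  have : w - average H w = (Nat.card H : ℝ)⁻¹ • ∑ h : H, (w - ρ (h : G) w) := by
    rw [sum_sub_distrib, smul_sub, ← average_apply, inv_card_smul_sum_const]
  rw [this]
  exact norm_inv_card_smul_sum_le _ fun h => by rw [norm_sub_rev]; exact hβ h h.2

lemma displacement_average_le {g : G} {β : ℝ} (hβ : ∀ k ∈ K, displacement v (k⁻¹ * g * k) ≤ β) :
    displacement (average K v) g ≤ β := by
  have : ρ g (average K v) - average K v =
      (Nat.card K : ℝ)⁻¹ • ∑ k : K, ρ (k : G) (ρ ((k : G)⁻¹ * g * k) v - v) := by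
    simp only [average_apply, map_smul, map_sum, map_sub, rightRegular_rightRegular, ← smul_sub,
      ← sum_sub_distrib, ← mul_assoc, mul_inv_cancel, one_mul]
  rw [displacement_apply, this]
  exact norm_inv_card_smul_sum_le _ fun k => by
    rw [LinearIsometryEquiv.norm_map]; exact hβ k k.2

lemma displacement_average_mul_of_mem (g : G) {τ : G} (hτ : τ ∈ K) :
    displacement (average K v) (g * τ) = displacement (average K v) g := by
  rw [displacement_apply, displacement_apply, ← rightRegular_rightRegular,
    rightRegular_average v hτ]

theorem norm_sq_le_of_subgroup_chain (H : ℕ → Subgroup G) {n : ℕ} (h0 : H 0 = ⊤) (hn : H n = ⊥)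
    (hle : ∀ k < n, H (k + 1) ≤ H k) {β : ℝ}
    (hstep : ∀ k < n, ‖average (H (k + 1)) v - average (H k) v‖ ≤ β) (hv : ∑ x, v x = 0) :
    ‖v‖ ^ 2 ≤ n * β ^ 2 := by
  calc ‖v‖ ^ 2 = ∑ k ∈ range n, (‖average (H (k + 1)) v‖ ^ 2 - ‖average (H k) v‖ ^ 2) := by
        rw [sum_range_sub (fun k => ‖average (H k) v‖ ^ 2), hn, h0, average_bot,
          average_top_eq_zero v hv]
        simp
    _ = ∑ k ∈ range n, ‖average (H (k + 1)) v - average (H k) v‖ ^ 2 :=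
        sum_congr rfl fun k hk => (norm_average_sub_average_sq v (hle k (mem_range.1 hk))).symm
    _ ≤ ∑ _k ∈ range n, β ^ 2 := sum_le_sum fun k hk =>
        pow_le_pow_left₀ (norm_nonneg _) (hstep k (mem_range.1 hk)) 2
    _ = n * β ^ 2 := by simp

end RightRegular

namespace GroupSeminorm

variable {G : Type*} [Group G] (N : GroupSeminorm G)

lemma map_conj_le (a g : G) : N (a * g * a⁻¹) ≤ 2 * N a + N g := by
  have h₁ := map_mul_le_add N (a * g) a⁻¹
  have h₂ := map_mul_le_add N a g
  rw [map_inv_eq_map] at h₁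
  linarith

lemma map_pow_le (g : G) (j : ℕ) : N (g ^ j) ≤ j * N g := by
  induction j with
  | zero => simp
  | succ j ih =>
    rw [pow_succ]
    push_cast
    linarith [map_mul_le_add N (g ^ j) g]

end GroupSeminorm

section Transpositions

open Equiv Fin.NatCast

variable {n : ℕ} [NeZero n] (N : GroupSeminorm (Perm (Fin n))) {β : ℝ}

lemma finRotate_pow_apply (j : ℕ) (i : Fin n) : (finRotate n ^ j) i = i + j := by
  induction j with
  | zero => simp
  | succ j ih => rw [pow_succ', Perm.mul_apply, ih, finRotate_apply, Nat.cast_succ, add_assoc]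

lemma swap_zero_add_one {i : Fin n} (h₀ : i + 1 ≠ 0) (h₁ : i + 1 ≠ 1) :
    swap 0 (i + 1) = swap 0 1 * (finRotate n * swap 0 i * (finRotate n)⁻¹) * (swap 0 1)⁻¹ := by
  rw [← swap_apply_apply, finRotate_apply, finRotate_apply, zero_add, ← swap_apply_apply,
    swap_apply_right, swap_apply_of_ne_of_ne h₀ h₁]

lemma map_swap_zero_add_one_le (hs : N (swap 0 1) ≤ β) (hc : N (finRotate n) ≤ β) (i : Fin n)
    (h₀ : i + 1 ≠ 0) :
    N (swap 0 (i + 1)) ≤ N (swap 0 i) + 4 * β := by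
  have hβ : 0 ≤ β := (apply_nonneg N _).trans hs
  by_cases h₁ : i + 1 = 1
  · rw [h₁]; linarith [apply_nonneg N (swap 0 i)]
  rw [swap_zero_add_one h₀ h₁]
  linarith [N.map_conj_le (swap 0 1) (finRotate n * swap 0 i * (finRotate n)⁻¹),
    N.map_conj_le (finRotate n) (swap 0 i)]

lemma map_swap_zero_natCast_le (hs : N (swap 0 1) ≤ β) (hc : N (finRotate n) ≤ β) (d : ℕ)
    (hd : d < n) : N (swap 0 (d : Fin n)) ≤ 4 * d * β := by
  induction d with
  | zero => simp [swap_self, ← Perm.one_def, map_one_eq_zero]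
  | succ d ih =>
    have h₀ : (d : Fin n) + 1 ≠ 0 := by
      rw [← Nat.cast_succ, Ne, Fin.natCast_eq_zero]
      exact Nat.not_dvd_of_pos_of_lt d.succ_pos hd
    rw [Nat.cast_succ]
    push_cast
    linarith [map_swap_zero_add_one_le N hs hc _ h₀, ih (by omega)]

lemma map_swap_le (hs : N (swap 0 1) ≤ β) (hc : N (finRotate n) ≤ β) (a b : Fin n) :
    N (swap a b) ≤ 6 * n * β := by
  have hβ : 0 ≤ β := (apply_nonneg N _).trans hs
  have hswap : swap a b = finRotate n ^ (a : ℕ) * swap 0 (b - a) * (finRotate n ^ (a : ℕ))⁻¹ := by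
    rw [← swap_apply_apply, finRotate_pow_apply, finRotate_pow_apply, Fin.cast_val_eq_self,
      zero_add, sub_add_cancel]
  have hpow := N.map_pow_le (finRotate n) a
  have hzero : N (swap 0 (b - a)) ≤ 4 * (b - a : Fin n) * β := by
    simpa using map_swap_zero_natCast_le N hs hc _ (b - a).isLt
  have ha : (a : ℝ) ≤ n := by exact_mod_cast a.isLt.le
  have hba : ((b - a : Fin n) : ℝ) ≤ n := by exact_mod_cast (b - a).isLt.le
  rw [hswap]
  refine (N.map_conj_le _ _).trans ?_
  nlinarith [mul_le_mul_of_nonneg_left hc (Nat.cast_nonneg (α := ℝ) a)]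

end Transpositions

section PrefixFixer

open Equiv

def prefixFixer (n k : ℕ) : Subgroup (Perm (Fin n)) :=
  fixingSubgroup (Perm (Fin n)) {i : Fin n | (i : ℕ) < k}

variable {n : ℕ}

lemma mem_prefixFixer {k : ℕ} {σ : Perm (Fin n)} :
    σ ∈ prefixFixer n k ↔ ∀ i : Fin n, (i : ℕ) < k → σ i = i := by
  simp [prefixFixer, mem_fixingSubgroup_iff, Perm.smul_def]

lemma prefixFixer_zero : prefixFixer n 0 = ⊤ := by
  ext σ; simp [mem_prefixFixer]

lemma prefixFixer_self : prefixFixer n n = ⊥ := by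
  ext σ
  simp only [mem_prefixFixer, Subgroup.mem_bot]
  exact ⟨fun h => Perm.ext fun i => h i i.isLt, fun h i _ => by simp [h]⟩

lemma prefixFixer_succ_le (k : ℕ) : prefixFixer n (k + 1) ≤ prefixFixer n k :=
  fixingSubgroup_antitone _ _ fun i (hi : (i : ℕ) < k) => show (i : ℕ) < k + 1 by omega

lemma exists_swap_mul_of_mem_prefixFixer {k : ℕ} (hk : k < n) {σ : Perm (Fin n)}
    (hσ : σ ∈ prefixFixer n k) :
    ∃ τ ∈ prefixFixer n (k + 1), σ = swap ⟨k, hk⟩ (σ ⟨k, hk⟩) * τ := by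
  refine ⟨swap ⟨k, hk⟩ (σ ⟨k, hk⟩) * σ, mem_prefixFixer.2 fun i hi => ?_,
    (swap_mul_self_mul _ _ _).symm⟩
  rcases Nat.lt_succ_iff_lt_or_eq.1 hi with hi | hi
  · have hik : i ≠ ⟨k, hk⟩ := Fin.ne_of_val_ne hi.ne
    have hσi : σ i = i := mem_prefixFixer.1 hσ i hi
    rw [Perm.mul_apply, hσi, swap_apply_of_ne_of_ne hik]
    exact hσi ▸ σ.injective.ne hik
  · obtain rfl : i = ⟨k, hk⟩ := Fin.ext hi
    rw [Perm.mul_apply, swap_apply_right]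

end PrefixFixer

section SymmetricGroup

open Equiv

variable {n : ℕ} (v : EuclideanSpace ℝ (Perm (Fin n)))

lemma norm_average_prefixFixer_succ_sub_le {B : ℝ}
    (hB : ∀ a b : Fin n, displacement v (swap a b) ≤ B) {k : ℕ} (hk : k < n) :
    ‖average (prefixFixer n (k + 1)) v - average (prefixFixer n k) v‖ ≤ B := by
  rw [← average_average_of_le v (prefixFixer_succ_le k)]
  refine norm_sub_average_le _ fun σ hσ => ?_
  obtain ⟨τ, hτ, hστ⟩ := exists_swap_mul_of_mem_prefixFixer hk hσ
  rw [hστ, displacement_average_mul_of_mem v _ hτ]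
  refine displacement_average_le v fun π _ => ?_
  -- `π⁻¹ * swap a b * π = swap (π⁻¹ a) (π⁻¹ b)`
  rw [← inv_inv π, inv_inv π⁻¹, ← swap_apply_apply]
  exact hB _ _

theorem norm_sq_le_of_displacement_le [NeZero n] {β : ℝ} (hv : ∑ x, v x = 0)
    (hs : displacement v (swap 0 1) ≤ β) (hc : displacement v (finRotate n) ≤ β) :
    ‖v‖ ^ 2 ≤ 36 * n ^ 3 * β ^ 2 := by
  have hstep := fun k (hk : k < n) => norm_average_prefixFixer_succ_sub_le v
    (map_swap_le (displacement v) hs hc) hk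
  calc ‖v‖ ^ 2 ≤ n * (6 * n * β) ^ 2 :=
        norm_sq_le_of_subgroup_chain v (prefixFixer n) prefixFixer_zero prefixFixer_self
          (fun k _ => prefixFixer_succ_le k) hstep hv
    _ = 36 * n ^ 3 * β ^ 2 := by ring

end SymmetricGroup

section Laplacian

variable {V : Type*} [Fintype V] [DecidableEq V] (G : SimpleGraph V) [DecidableRel G.Adj]

lemma lapMat_eq_neg_lapMatrix : lapMat G = -G.lapMatrix ℝ := by
  ext x y
  simp only [lapMat, degC, Matrix.of_apply, Matrix.neg_apply, SimpleGraph.lapMatrix,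
    SimpleGraph.degMatrix, Matrix.sub_apply, Matrix.diagonal_apply, SimpleGraph.adjMatrix_apply,
    ← SimpleGraph.card_neighborFinset_eq_degree, SimpleGraph.neighborFinset_eq_filter, neg_sub]
  congr!

lemma sum_lapMatrix_mulVec (f : V → ℝ) : ∑ x, (G.lapMatrix ℝ *ᵥ f) x = 0 := by
  calc ∑ x, (G.lapMatrix ℝ *ᵥ f) x = (fun _ => 1) ⬝ᵥ (G.lapMatrix ℝ *ᵥ f) := by
        simp [dotProduct]
    _ = (G.lapMatrix ℝ *ᵥ fun _ => 1) ⬝ᵥ f := by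
        rw [Matrix.dotProduct_mulVec, ← Matrix.vecMul_transpose, (G.isSymm_lapMatrix ℝ).eq]
    _ = 0 := by rw [G.lapMatrix_mulVec_const_eq_zero, zero_dotProduct]

lemma lapMatrix_ne_zero (hG : G ≠ ⊥) : G.lapMatrix ℝ ≠ 0 := by
  obtain ⟨x, y, hxy⟩ := SimpleGraph.ne_bot_iff_exists_adj.1 hG
  intro h
  have := congrFun (congrFun h x) y
  simp [SimpleGraph.lapMatrix, SimpleGraph.degMatrix, hxy.ne, hxy] at this

theorem le_spectralGap (hG : G ≠ ⊥) {c : ℝ}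
    (hc : ∀ f : V → ℝ, ∑ x, f x = 0 → c * (f ⬝ᵥ f) ≤ f ⬝ᵥ (G.lapMatrix ℝ *ᵥ f)) :
    c ≤ spectralGap G := by
  rw [spectralGap, lapMat_eq_neg_lapMatrix, neg_neg]
  apply le_csInf
  · obtain ⟨f, μ, hμ, hf, heig⟩ :=
      (G.isHermitian_lapMatrix ℝ).exists_eigenvector_of_ne_zero (lapMatrix_ne_zero G hG)
    exact ⟨μ, hμ, f, hf, heig⟩
  · rintro μ ⟨hμ, f, hf, heig⟩
    have hsum : ∑ x, f x = 0 := by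
      have h := sum_lapMatrix_mulVec G f
      rw [heig] at h
      simpa [← Finset.mul_sum, hμ] using h
    have hpos : 0 < f ⬝ᵥ f :=
      (Finset.sum_nonneg fun x _ => mul_self_nonneg (f x)).lt_of_ne
        (Ne.symm (dotProduct_self_eq_zero.not.2 hf))
    have h := hc f hsum
    rw [heig, dotProduct_smul, smul_eq_mul] at h
    exact le_of_mul_le_mul_right h hpos

lemma sum_sq_sub_le_two_mul_dotProduct_lapMatrix (φ : V → V) (hφ : ∀ x, G.Adj x (φ x))
    (f : V → ℝ) : ∑ x, (f (φ x) - f x) ^ 2 ≤ 2 * (f ⬝ᵥ (G.lapMatrix ℝ *ᵥ f)) := by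
  rw [← Matrix.toLinearMap₂'_apply' (T := ℝ), SimpleGraph.lapMatrix_toLinearMap₂' ℝ G,
    mul_div_cancel₀ _ two_ne_zero]
  refine Finset.sum_le_sum fun x _ => ?_
  calc (f (φ x) - f x) ^ 2 = if G.Adj x (φ x) then (f x - f (φ x)) ^ 2 else 0 := by
        rw [if_pos (hφ x)]; ring
    _ ≤ ∑ y, if G.Adj x y then (f x - f y) ^ 2 else 0 :=
        Finset.single_le_sum (f := fun y => if G.Adj x y then (f x - f y) ^ 2 else 0)
          (fun y _ => by positivity) (Finset.mem_univ _)

end Laplacian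

section CayleyGraph

open Equiv

variable (m : ℕ)

lemma one_notMem_snGen : (1 : Perm (Fin (m + 2))) ∉ snGen m := by
  have h01 : (0 : Fin (m + 2)) ≠ 1 := Fin.zero_ne_one
  rintro (h | h | h)
  · exact h01 (by simpa using congrArg (· 0) h)
  · exact h01 (by simpa using congrArg (· 0) h)
  · exact h01 (by simpa using congrArg (· 0) (inv_eq_one.1 h.symm).symm)

lemma snGraph_adj_mul {s : Perm (Fin (m + 2))} (hs : s ∈ snGen m) (x : Perm (Fin (m + 2))) :
    (snGraph m).Adj x (x * s) :=
  ⟨fun h => one_notMem_snGen m (by rwa [left_eq_mul.1 h] at hs), by rwa [inv_mul_cancel_left]⟩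

lemma snGraph_ne_bot : snGraph m ≠ ⊥ :=
  SimpleGraph.ne_bot_iff_exists_adj.2 ⟨1, _, snGraph_adj_mul m (s := swap 0 1) (by simp [snGen]) 1⟩

theorem poincare_snGraph [DecidableRel (snGraph m).Adj] (f : Perm (Fin (m + 2)) → ℝ)
    (hf : ∑ x, f x = 0) :
    f ⬝ᵥ f ≤ 72 * ((m : ℝ) + 2) ^ 3 * (f ⬝ᵥ ((snGraph m).lapMatrix ℝ *ᵥ f)) := by
  set Q := f ⬝ᵥ ((snGraph m).lapMatrix ℝ *ᵥ f)
  have hgen : ∀ s ∈ snGen m, (∑ x, (f (x * s) - f x) ^ 2) ≤ 2 * Q := fun s hs =>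
    sum_sq_sub_le_two_mul_dotProduct_lapMatrix _ _ (snGraph_adj_mul m hs) f
  have hQ : 0 ≤ Q := by
    linarith [hgen _ (Set.mem_insert _ _), Finset.sum_nonneg fun x (_ : x ∈ Finset.univ) =>
      sq_nonneg (f (x * swap 0 1) - f x)]
  have hdisp : ∀ s ∈ snGen m, displacement (WithLp.toLp 2 f) s ≤ √(2 * Q) := fun s hs =>
    Real.le_sqrt_of_sq_le ((displacement_toLp_sq f s).trans_le (hgen s hs))
  have h := norm_sq_le_of_displacement_le (WithLp.toLp 2 f) (by simpa using hf)
    (hdisp _ (by simp [snGen])) (hdisp _ (by simp [snGen]))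
  rw [norm_toLp_sq, Real.sq_sqrt (by linarith)] at h
  push_cast at h
  linarith

end CayleyGraph

/-- there is `c₂ > 0`, independent of `n`, such that the Cayley graph of
`Sₙ` with generators `{(12), (12⋯n)^{±1}}` has spectral gap `λ ≥ c₂ n⁻³` (here `n = m + 2`). -/
theorem spectral_gap_lower_sn :
    ∃ c₂ : ℝ, 0 < c₂ ∧ ∀ m : ℕ,
      c₂ / ((m : ℝ) + 2) ^ 3 ≤ spectralGap (snGraph m) := by
  classical
  refine ⟨1 / 72, by norm_num, fun m => le_spectralGap _ (snGraph_ne_bot m) fun f hf => ?_⟩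
  have h := poincare_snGraph m f hf
  rw [div_div, div_mul_eq_mul_div, one_mul, div_le_iff₀ (by positivity)]
  linarith
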